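/- arXiv:2407.20819 — 3 statements merged into one kernel-verified Lean document; each statement's English description precedes it below -/
import Mathlib

section
/- Under a generic allocation rule, for any fixed stratum h ∈ {1,…,H} and any non-empty subset S ⊆ {1,…,J}, the following inclusions hold up to null events: {liminf_{n→∞} Σ_{j∈S} π_{j,h,n} > 0} ⊆ {liminf_{n→∞} (Σ_{j∈S} N_{j,h,n})/n > 0} ⊆ ∪_{j∈S} {lim_{n→∞} N_{j,h,n} = ∞}. -/
/-!
Let `X_i` indicate that patient `i` lies in stratum `h` and is assigned to an arm of `S`. Since
`Z_i` is independent of the past and the allocation rule fixes the conditional law of `δ_i`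
given the past and `Z_i`, the conditional expectation of `X_i` given the past is
`p_h * ∑_{j ∈ S} π_{j,h,i}`. The centred increments are therefore bounded martingale
differences; their partial sums `M_n` satisfy `E[M_n⁴] ≤ 4n²`, so `∑ E[(M_n/n)⁴] < ∞` and
`M_n/n → 0` almost surely. Thus `∑_{j ∈ S} N_{j,h,n}/n` is asymptotically a Cesàro average of
`p_h * ∑_{j ∈ S} π_{j,h,i}`, and its liminf is positive whenever that of `∑_{j ∈ S} π_{j,h,n}`
is. The second inclusion holds pointwise: if every count `N_{j,h,n}`, `j ∈ S`, stayed bounded,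
these monotone sequences would converge, and their sum divided by `n` would tend to `0`.
-/

open MeasureTheory ProbabilityTheory Filter Topology Finset

section

variable {Ω : Type*} {m0 : MeasurableSpace Ω} {μ : Measure Ω}

def accumulatedFiltration (σ : ℕ → MeasurableSpace Ω) (hσ : ∀ i, σ i ≤ m0) :
    Filtration ℕ m0 where
  seq n := ⨆ i ∈ range n, σ i
  mono' _ _ hab := biSup_mono fun _ hi => mem_range.2 ((mem_range.1 hi).trans_le hab)
  le' _ := iSup₂_le fun i _ => hσ i

lemma le_accumulatedFiltration_succ {σ : ℕ → MeasurableSpace Ω} (hσ : ∀ i, σ i ≤ m0) (i : ℕ) :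
    σ i ≤ accumulatedFiltration σ hσ (i + 1) :=
  le_iSup₂_of_le i (self_mem_range_succ i) le_rfl

lemma comap_top_le_of_countable_range {β : Type*} [MeasurableSpace β] [MeasurableSingletonClass β]
    {f : Ω → β} (hf : Measurable[m0] f) (hc : (Set.range f).Countable) :
    MeasurableSpace.comap f ⊤ ≤ m0 := by
  rintro _ ⟨s, -, rfl⟩
  rw [← Set.preimage_inter_range]
  exact hf (hc.mono Set.inter_subset_right).measurableSet

lemma integral_mul_eq_zero_of_condExp_eq_zero [IsFiniteMeasure μ] {m : MeasurableSpace Ω}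
    (hm : m ≤ m0) {f g : Ω → ℝ} {C : ℝ} (hf : StronglyMeasurable[m] f) (hfC : ∀ ω, ‖f ω‖ ≤ C)
    (hg : Integrable g μ) (hg0 : μ[g|m] =ᵐ[μ] 0) : ∫ ω, f ω * g ω ∂μ = 0 := by
  have hfg : Integrable (f * g) μ :=
    hg.bdd_mul (hf.mono hm).aestronglyMeasurable (ae_of_all _ hfC)
  calc ∫ ω, f ω * g ω ∂μ = ∫ ω, (μ[f * g|m]) ω ∂μ := (integral_condExp hm).symm
    _ = ∫ ω, (f * μ[g|m]) ω ∂μ :=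
        integral_congr_ae (condExp_mul_of_stronglyMeasurable_left hf hfg hg)
    _ = 0 := integral_eq_zero_of_ae <| by
        filter_upwards [hg0] with ω hω
        simp [hω]

lemma ae_tendsto_zero_of_summable_integral {f : ℕ → Ω → ℝ} (hf : ∀ n, Integrable (f n) μ)
    (hf0 : ∀ n, 0 ≤ᵐ[μ] f n) (hs : Summable fun n => ∫ ω, f n ω ∂μ) :
    ∀ᵐ ω ∂μ, Tendsto (fun n => f n ω) atTop (𝓝 0) := by
  have hmeas (n : ℕ) : AEMeasurable (fun ω => ENNReal.ofReal (f n ω)) μ :=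
    (hf n).aemeasurable.ennreal_ofReal
  have hfin : ∫⁻ ω, ∑' n, ENNReal.ofReal (f n ω) ∂μ ≠ ⊤ := by
    rw [lintegral_tsum hmeas]
    simp_rw [← ofReal_integral_eq_lintegral_ofReal (hf _) (hf0 _)]
    rw [← ENNReal.ofReal_tsum_of_nonneg (fun n => integral_nonneg_of_ae (hf0 n)) hs]
    exact ENNReal.ofReal_ne_top
  filter_upwards [ae_lt_top' (AEMeasurable.tsum hmeas) hfin, ae_all_iff.2 hf0] with ω hω hω0
  simpa only [ENNReal.toReal_ofReal (hω0 _)] using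
    (ENNReal.summable_toReal hω.ne).tendsto_atTop_zero

lemma condExp_mul_ae_eq_integral_mul_of_indep [IsFiniteMeasure μ] {m mZ : MeasurableSpace Ω}
    (hm : m ≤ m0) (hmZ : mZ ≤ m0) (hind : Indep mZ m μ) {χ g π : Ω → ℝ} {Cχ Cπ : ℝ}
    (hχ : StronglyMeasurable[mZ] χ) (hχC : ∀ ω, ‖χ ω‖ ≤ Cχ) (hg : Integrable g μ)
    (hπ : StronglyMeasurable[m] π) (hπC : ∀ ω, ‖π ω‖ ≤ Cπ)
    (hgπ : χ * μ[g|m ⊔ mZ] =ᵐ[μ] χ * π) :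
    μ[χ * g|m] =ᵐ[μ] fun ω => μ[χ] * π ω := by
  have hχi : Integrable χ μ := .of_bound (hχ.mono hmZ).aestronglyMeasurable _ (ae_of_all _ hχC)
  have hπχ : Integrable (π * χ) μ :=
    hχi.bdd_mul (hπ.mono hm).aestronglyMeasurable (ae_of_all _ hπC)
  calc μ[χ * g|m] =ᵐ[μ] μ[μ[χ * g|m ⊔ mZ]|m] :=
        (condExp_condExp_of_le le_sup_left (sup_le hm hmZ)).symm
    _ =ᵐ[μ] μ[π * χ|m] := condExp_congr_ae <|
        (condExp_mul_of_stronglyMeasurable_left (hχ.mono (le_sup_right : mZ ≤ m ⊔ mZ))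
          (hg.bdd_mul (hχ.mono hmZ).aestronglyMeasurable (ae_of_all _ hχC)) hg).trans
          (hgπ.trans (.of_eq (mul_comm χ π)))
    _ =ᵐ[μ] π * μ[χ|m] := condExp_mul_of_stronglyMeasurable_left hπ hπχ hχi
    _ =ᵐ[μ] fun ω => μ[χ] * π ω := by
        filter_upwards [condExp_indep_eq hmZ hm hχ hind] with ω hω
        simp [hω, mul_comm]

end

lemma add_sq_le_of_abs_le_one {s x : ℝ} (hx : |x| ≤ 1) :
    (s + x) ^ 2 ≤ s ^ 2 + 2 * (s * x) + 1 := by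
  nlinarith [abs_le.1 hx]

lemma add_pow_four_le_of_abs_le_one {s x : ℝ} (hx : |x| ≤ 1) :
    (s + x) ^ 4 ≤ s ^ 4 + 4 * (s ^ 3 * x) + (8 * s ^ 2 + 3) := by
  have hx2 : x ^ 2 ≤ 1 := by nlinarith [abs_le.1 hx]
  nlinarith [sq_nonneg (s * x - 1), sq_nonneg (s * x + 1),
    mul_nonneg (sq_nonneg s) (sub_nonneg.2 hx2), sq_nonneg (x ^ 2)]

section MartingaleDifference

variable {Ω : Type*} {m0 : MeasurableSpace Ω} {μ : Measure Ω} [IsProbabilityMeasure μ]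
  {𝓖 : Filtration ℕ m0} {d : ℕ → Ω → ℝ}

lemma stronglyMeasurable_sum_range (hd : ∀ i, StronglyMeasurable[𝓖 (i + 1)] (d i)) (n : ℕ) :
    StronglyMeasurable[𝓖 n] fun ω => ∑ i ∈ range n, d i ω :=
  Finset.stronglyMeasurable_fun_sum _ fun i hi => (hd i).mono (𝓖.mono (mem_range.1 hi))

lemma norm_pow_sum_range_le (hd1 : ∀ i ω, |d i ω| ≤ 1) (k n : ℕ) (ω : Ω) :
    ‖(∑ i ∈ range n, d i ω) ^ k‖ ≤ (n : ℝ) ^ k := by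
  have hS : |∑ i ∈ range n, d i ω| ≤ n :=
    (abs_sum_le_sum_abs _ _).trans <| by simpa using sum_le_sum fun i (_ : i ∈ range n) => hd1 i ω
  simpa [abs_pow] using pow_le_pow_left₀ (abs_nonneg _) hS k

lemma integrable_pow_sum_range (hd : ∀ i, StronglyMeasurable[𝓖 (i + 1)] (d i))
    (hd1 : ∀ i ω, |d i ω| ≤ 1) (k n : ℕ) :
    Integrable (fun ω => (∑ i ∈ range n, d i ω) ^ k) μ :=
  .of_bound (((stronglyMeasurable_sum_range hd n).mono (𝓖.le n)).pow k).aestronglyMeasurable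
    _ (ae_of_all _ (norm_pow_sum_range_le hd1 k n))

lemma integrable_pow_sum_range_mul (hd : ∀ i, StronglyMeasurable[𝓖 (i + 1)] (d i))
    (hd1 : ∀ i ω, |d i ω| ≤ 1) (k n : ℕ) :
    Integrable (fun ω => (∑ i ∈ range n, d i ω) ^ k * d n ω) μ :=
  (Integrable.of_bound ((hd n).mono (𝓖.le _)).aestronglyMeasurable 1 (ae_of_all _ (hd1 n))).bdd_mul
    (((stronglyMeasurable_sum_range hd n).mono (𝓖.le n)).pow k).aestronglyMeasurable
    (ae_of_all _ (norm_pow_sum_range_le hd1 k n))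

lemma integral_pow_sum_range_mul_eq_zero (hd : ∀ i, StronglyMeasurable[𝓖 (i + 1)] (d i))
    (hd1 : ∀ i ω, |d i ω| ≤ 1) (hd0 : ∀ i, μ[d i|𝓖 i] =ᵐ[μ] 0) (k n : ℕ) :
    ∫ ω, (∑ i ∈ range n, d i ω) ^ k * d n ω ∂μ = 0 :=
  integral_mul_eq_zero_of_condExp_eq_zero (𝓖.le n) ((stronglyMeasurable_sum_range hd n).pow k)
    (norm_pow_sum_range_le hd1 k n)
    (.of_bound ((hd n).mono (𝓖.le _)).aestronglyMeasurable 1 (ae_of_all _ (hd1 n))) (hd0 n)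

lemma integral_sq_sum_range_le (hd : ∀ i, StronglyMeasurable[𝓖 (i + 1)] (d i))
    (hd1 : ∀ i ω, |d i ω| ≤ 1) (hd0 : ∀ i, μ[d i|𝓖 i] =ᵐ[μ] 0) (n : ℕ) :
    ∫ ω, (∑ i ∈ range n, d i ω) ^ 2 ∂μ ≤ n := by
  induction n with
  | zero => simp
  | succ n ih =>
    have hS := integrable_pow_sum_range (μ := μ) hd hd1 2 n
    have hSd := integrable_pow_sum_range_mul (μ := μ) hd hd1 1 n
    have horth := integral_pow_sum_range_mul_eq_zero hd hd1 hd0 1 n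
    simp only [pow_one] at hSd horth
    calc _ ≤ ∫ ω, (∑ i ∈ range n, d i ω) ^ 2 + 2 * ((∑ i ∈ range n, d i ω) * d n ω) + 1 ∂μ :=
          integral_mono (integrable_pow_sum_range hd hd1 2 (n + 1)) (by fun_prop) fun ω => by
            simpa only [sum_range_succ] using add_sq_le_of_abs_le_one (hd1 n ω)
      _ = ∫ ω, (∑ i ∈ range n, d i ω) ^ 2 ∂μ + 1 := by
          rw [integral_add (by fun_prop) (by fun_prop), integral_add (by fun_prop) (by fun_prop),
            integral_const_mul, horth]
          simp
      _ ≤ (n + 1 : ℕ) := by push_cast; linarith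

lemma integral_pow_four_sum_range_le (hd : ∀ i, StronglyMeasurable[𝓖 (i + 1)] (d i))
    (hd1 : ∀ i ω, |d i ω| ≤ 1) (hd0 : ∀ i, μ[d i|𝓖 i] =ᵐ[μ] 0) (n : ℕ) :
    ∫ ω, (∑ i ∈ range n, d i ω) ^ 4 ∂μ ≤ 4 * (n : ℝ) ^ 2 := by
  induction n with
  | zero => simp
  | succ n ih =>
    have hS := integrable_pow_sum_range (μ := μ) hd hd1
    have hSd := integrable_pow_sum_range_mul (μ := μ) hd hd1 3 n
    calc _ ≤ ∫ ω, (∑ i ∈ range n, d i ω) ^ 4 + 4 * ((∑ i ∈ range n, d i ω) ^ 3 * d n ω)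
          + (8 * (∑ i ∈ range n, d i ω) ^ 2 + 3) ∂μ :=
          integral_mono (hS 4 (n + 1)) (by fun_prop) fun ω => by
            simpa only [sum_range_succ] using add_pow_four_le_of_abs_le_one (hd1 n ω)
      _ = ∫ ω, (∑ i ∈ range n, d i ω) ^ 4 ∂μ + (8 * ∫ ω, (∑ i ∈ range n, d i ω) ^ 2 ∂μ + 3) := by
          rw [integral_add (by fun_prop) (by fun_prop), integral_add (by fun_prop) (by fun_prop),
            integral_add (by fun_prop) (by fun_prop), integral_const_mul, integral_const_mul,
            integral_pow_sum_range_mul_eq_zero hd hd1 hd0]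
          simp
      _ ≤ 4 * ((n + 1 : ℕ) : ℝ) ^ 2 := by
          have := integral_sq_sum_range_le hd hd1 hd0 n
          push_cast; nlinarith

theorem ae_tendsto_sum_range_div (hd : ∀ i, StronglyMeasurable[𝓖 (i + 1)] (d i))
    (hd1 : ∀ i ω, |d i ω| ≤ 1) (hd0 : ∀ i, μ[d i|𝓖 i] =ᵐ[μ] 0) :
    ∀ᵐ ω ∂μ, Tendsto (fun n => (∑ i ∈ range n, d i ω) / n) atTop (𝓝 0) := by
  have hint (n : ℕ) : Integrable (fun ω => ((∑ i ∈ range n, d i ω) / n) ^ 4) μ := by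
    simpa only [div_pow] using (integrable_pow_sum_range hd hd1 4 n).div_const _
  have hbound (n : ℕ) : ∫ ω, ((∑ i ∈ range n, d i ω) / n) ^ 4 ∂μ ≤ 4 * ((n : ℝ) ^ 2)⁻¹ := by
    rcases n.eq_zero_or_pos with rfl | hn
    · simp
    simp only [div_pow, integral_div]
    rw [div_le_iff₀ (by positivity)]
    calc _ ≤ 4 * (n : ℝ) ^ 2 := integral_pow_four_sum_range_le hd hd1 hd0 n
      _ = _ := by field_simp
  have hsum : Summable fun n : ℕ => ∫ ω, ((∑ i ∈ range n, d i ω) / n) ^ 4 ∂μ :=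
    .of_nonneg_of_le (fun n => integral_nonneg fun ω => by positivity) hbound
      ((Real.summable_nat_pow_inv.2 one_lt_two).mul_left 4)
  filter_upwards [ae_tendsto_zero_of_summable_integral hint
    (fun n => ae_of_all _ fun ω => by positivity) hsum] with ω hω
  have habs : Tendsto (fun n : ℕ => |(∑ i ∈ range n, d i ω) / n|) atTop (𝓝 0) := by
    have := (Real.continuous_sqrt.comp Real.continuous_sqrt).tendsto 0 |>.comp hω
    simp only [Function.comp_def, Real.sqrt_zero] at this
    refine this.congr fun n => ?_
    rw [show ∀ x : ℝ, x ^ 4 = (x ^ 2) ^ 2 from fun x => by ring, Real.sqrt_sq (sq_nonneg _),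
      Real.sqrt_sq_eq_abs]
  exact tendsto_zero_iff_abs_tendsto_zero _ |>.2 habs

theorem ae_tendsto_sum_range_sub_div {X c : ℕ → Ω → ℝ}
    (hX : ∀ i, StronglyMeasurable[𝓖 (i + 1)] (X i)) (hc : ∀ i, StronglyMeasurable[𝓖 i] (c i))
    (hX1 : ∀ i ω, X i ω ∈ Set.Icc (0 : ℝ) 1) (hc1 : ∀ i ω, c i ω ∈ Set.Icc (0 : ℝ) 1)
    (hXc : ∀ i, μ[X i|𝓖 i] =ᵐ[μ] c i) :
    ∀ᵐ ω ∂μ, Tendsto (fun n => (∑ i ∈ range n, (X i ω - c i ω)) / n) atTop (𝓝 0) := by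
  refine ae_tendsto_sum_range_div (d := fun i ω => X i ω - c i ω)
    (fun i => (hX i).sub ((hc i).mono (𝓖.mono i.le_succ))) (fun i ω => ?_) (fun i => ?_)
  · exact abs_le.2 ⟨by linarith [(hX1 i ω).1, (hc1 i ω).2], by linarith [(hX1 i ω).2, (hc1 i ω).1]⟩
  · have hXi : Integrable (X i) μ :=
      .of_mem_Icc 0 1 ((hX i).mono (𝓖.le _)).measurable.aemeasurable (ae_of_all _ (hX1 i))
    have hci : Integrable (c i) μ :=
      .of_mem_Icc 0 1 ((hc i).mono (𝓖.le _)).measurable.aemeasurable (ae_of_all _ (hc1 i))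
    filter_upwards [condExp_sub hXi hci (𝓖 i), hXc i] with ω hsub hω
    change μ[X i - c i|𝓖 i] ω = 0
    simp [hsub, hω, condExp_of_stronglyMeasurable (𝓖.le i) (hc i) hci]

end MartingaleDifference

lemma liminf_sum_range_div_pos {x s : ℕ → ℝ} {q : ℝ} (hx : ∀ i, x i ≤ 1) (hs0 : ∀ i, 0 ≤ s i)
    (hq : 0 < q) (hs : 0 < liminf s atTop)
    (hxs : Tendsto (fun n => (∑ i ∈ range n, (x i - q * s i)) / n) atTop (𝓝 0)) :
    0 < liminf (fun n => (∑ i ∈ range n, x i) / n) atTop := by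
  set ε := q * (liminf s atTop / 2)
  have hε : 0 < ε := mul_pos hq (half_pos hs)
  have hc : ∀ᶠ i in atTop, ε ≤ q * s i :=
    (eventually_lt_of_lt_liminf (half_lt_self hs) (isBoundedUnder_of ⟨0, hs0⟩)).mono
      fun i hi => mul_le_mul_of_nonneg_left hi.le hq.le
  -- Cesàro averages of `min (q * s i) ε` tend to `ε` and minorize those of `q * s i`.
  have hmin : Tendsto (fun n : ℕ => (n : ℝ)⁻¹ * ∑ i ∈ range n, min (q * s i) ε) atTop (𝓝 ε) :=
    Tendsto.cesaro <| tendsto_const_nhds.congr' <| hc.mono fun i hi => (min_eq_right hi).symm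
  have hlow : ∀ᶠ n : ℕ in atTop, ε / 2 ≤ (∑ i ∈ range n, x i) / n := by
    filter_upwards [(hxs.add hmin).eventually (eventually_gt_nhds (by linarith : ε / 2 < 0 + ε))]
      with n hn
    refine hn.le.trans ?_
    rw [sum_sub_distrib, div_eq_inv_mul, div_eq_inv_mul, ← mul_add]
    gcongr
    linarith [sum_le_sum fun i (_ : i ∈ range n) => min_le_left (q * s i) ε]
  -- Without an upper bound on the averages, the real `liminf` could be its junk value `0`.
  have hbdd (n : ℕ) : (∑ i ∈ range n, x i) / n ≤ 1 :=
    div_le_one_of_le₀ (by simpa using sum_le_sum fun i (_ : i ∈ range n) => hx i) n.cast_nonneg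
  exact (half_pos hε).trans_le (le_liminf_of_le (isCoboundedUnder_ge_of_le atTop hbdd) hlow)

lemma exists_tendsto_atTop_of_liminf_pos {ι : Type*} {T : Finset ι} {N : ι → ℕ → ℝ}
    (hN : ∀ j ∈ T, Monotone (N j)) (hpos : 0 < liminf (fun n => (∑ j ∈ T, N j n) / n) atTop) :
    ∃ j ∈ T, Tendsto (N j) atTop atTop := by
  by_contra! hfin
  have hconv : ∀ j ∈ T, ∃ l, Tendsto (N j) atTop (𝓝 l) := fun j hj =>
    (tendsto_atTop_of_monotone (hN j hj)).resolve_left (hfin j hj)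
  choose! l hl using hconv
  have h0 : Tendsto (fun n : ℕ => (∑ j ∈ T, N j n) / n) atTop (𝓝 0) :=
    (tendsto_finsetSum T hl).div_atTop tendsto_natCast_atTop_atTop
  exact hpos.ne' h0.liminf_eq

section StratifiedTrial

variable {Ω κ ι : Type*} {m0 : MeasurableSpace Ω} {μ : Measure Ω} [Fintype κ] [DecidableEq κ]
  [DecidableEq ι]

lemma condExp_stratum_mem_ae_eq [IsFiniteMeasure μ] {m : MeasurableSpace Ω} (hm : m ≤ m0)
    {Z : Ω → κ} {δ : Ω → ι} (hZ : MeasurableSpace.comap Z ⊤ ≤ m0)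
    (hδ : MeasurableSpace.comap δ ⊤ ≤ m0)
    (hind : Indep (MeasurableSpace.comap Z ⊤) m μ) {π : ι → κ → Ω → ℝ}
    (hπm : ∀ j k, Measurable[m] (π j k)) (hπ : ∀ j k ω, π j k ω ∈ Set.Icc (0 : ℝ) 1)
    (halloc : ∀ j, μ[fun ω => if δ ω = j then (1 : ℝ) else 0|m ⊔ MeasurableSpace.comap Z ⊤]
      =ᵐ[μ] fun ω => ∑ k, (if Z ω = k then (1 : ℝ) else 0) * π j k ω)
    (k : κ) (T : Finset ι) :
    μ[fun ω => if Z ω = k ∧ δ ω ∈ T then (1 : ℝ) else 0|m]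
      =ᵐ[μ] fun ω => μ.real {ω | Z ω = k} * ∑ j ∈ T, π j k ω := by
  set χ : Ω → ℝ := fun ω => if Z ω = k then 1 else 0
  set e : ι → Ω → ℝ := fun j ω => if δ ω = j then 1 else 0
  have hZk : MeasurableSet[MeasurableSpace.comap Z ⊤] {ω | Z ω = k} := ⟨{k}, trivial, rfl⟩
  have hχ : StronglyMeasurable[MeasurableSpace.comap Z ⊤] χ :=
    (measurable_const.ite hZk measurable_const).stronglyMeasurable
  have he (j : ι) : Integrable (e j) μ := by
    have hej : Measurable[m0] (e j) :=
      Measurable.ite (hδ _ ⟨{j}, trivial, rfl⟩) measurable_const measurable_const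
    exact .of_mem_Icc 0 1 hej.aemeasurable
      (ae_of_all _ fun ω => by by_cases h : δ ω = j <;> simp [e, h])
  have hsplit : (fun ω => if Z ω = k ∧ δ ω ∈ T then (1 : ℝ) else 0) = χ * ∑ j ∈ T, e j := by
    ext ω
    by_cases hZ : Z ω = k <;> simp [χ, e, hZ, Finset.sum_apply]
  have hχint : μ[χ] = μ.real {ω | Z ω = k} := by
    rw [← integral_indicator_one (hZ _ hZk)]
    congr 1 with ω
    by_cases h : Z ω = k <;> simp [χ, h]
  rw [hsplit, ← hχint]
  refine condExp_mul_ae_eq_integral_mul_of_indep hm hZ hind hχ (Cχ := 1) (fun ω => ?_)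
    (integrable_finsetSum' _ fun j _ => he j)
    (Finset.measurable_sum _ fun j _ => hπm j k).stronglyMeasurable (Cπ := #T) (fun ω => ?_) ?_
  · by_cases h : Z ω = k <;> simp [χ, h]
  · rw [Real.norm_of_nonneg (sum_nonneg fun j _ => (hπ j k ω).1)]
    simpa using sum_le_sum fun j (_ : j ∈ T) => (hπ j k ω).2
  · filter_upwards [condExp_finsetSum (s := T) (fun j _ => he j) (m ⊔ MeasurableSpace.comap Z ⊤),
      (eventually_all_finset T).2 fun j _ => halloc j] with ω hsum hj
    by_cases hZ : Z ω = k
    · simp only [Pi.mul_apply, hsum, Finset.sum_apply]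
      simp [χ, e, hZ, sum_congr rfl hj]
    · simp [χ, hZ]

theorem ae_tendsto_sum_range_stratum_sub_div [IsProbabilityMeasure μ] [Fintype ι]
    {𝓖 : Filtration ℕ m0} {Z : ℕ → Ω → κ} {δ : ℕ → Ω → ι}
    (hZδ : ∀ i, MeasurableSpace.comap (Z i) ⊤ ⊔ MeasurableSpace.comap (δ i) ⊤ ≤ 𝓖 (i + 1))
    (hind : ∀ i, Indep (MeasurableSpace.comap (Z i) ⊤) (𝓖 i) μ) {π : ι → κ → ℕ → Ω → ℝ}
    (hπm : ∀ j k n, Measurable[𝓖 n] (π j k n)) (hπ : ∀ j k n ω, π j k n ω ∈ Set.Icc (0 : ℝ) 1)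
    (hπsum : ∀ k n ω, ∑ j, π j k n ω = 1)
    (halloc : ∀ n j,
      μ[fun ω => if δ n ω = j then (1 : ℝ) else 0|𝓖 n ⊔ MeasurableSpace.comap (Z n) ⊤]
        =ᵐ[μ] fun ω => ∑ k, (if Z n ω = k then (1 : ℝ) else 0) * π j k n ω)
    (k : κ) (T : Finset ι) :
    ∀ᵐ ω ∂μ, Tendsto (fun n => (∑ i ∈ range n, ((if Z i ω = k ∧ δ i ω ∈ T then (1 : ℝ) else 0)
      - μ.real {ω | Z i ω = k} * ∑ j ∈ T, π j k i ω)) / n) atTop (𝓝 0) := by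
  have hZ (i : ℕ) : MeasurableSet[𝓖 (i + 1)] {ω | Z i ω = k} :=
    le_sup_left.trans (hZδ i) _ ⟨{k}, trivial, rfl⟩
  have hδ (i : ℕ) : MeasurableSet[𝓖 (i + 1)] {ω | δ i ω ∈ T} :=
    le_sup_right.trans (hZδ i) _ ⟨T, trivial, rfl⟩
  refine ae_tendsto_sum_range_sub_div
    (fun i => (measurable_const.ite ((hZ i).inter (hδ i)) measurable_const).stronglyMeasurable)
    (fun i => ((Finset.measurable_sum _ fun j _ => hπm j k i).const_mul _).stronglyMeasurable)
    (fun i ω => ?_) (fun i ω => ?_) (fun i => ?_)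
  · by_cases hω : Z i ω = k ∧ δ i ω ∈ T <;> simp [hω]
  · have hs0 : 0 ≤ ∑ j ∈ T, π j k i ω := sum_nonneg fun j _ => (hπ j k i ω).1
    have hs1 : ∑ j ∈ T, π j k i ω ≤ 1 := (hπsum k i ω) ▸
      sum_le_sum_of_subset_of_nonneg (subset_univ T) fun j _ _ => (hπ j k i ω).1
    exact ⟨mul_nonneg measureReal_nonneg hs0, mul_le_one₀ measureReal_le_one hs0 hs1⟩
  · exact condExp_stratum_mem_ae_eq (𝓖.le i) (le_sup_left.trans (hZδ i) |>.trans (𝓖.le _))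
      (le_sup_right.trans (hZδ i) |>.trans (𝓖.le _)) (hind i) (fun j k => hπm j k i)
      (fun j k => hπ j k i) (halloc i) k T

end StratifiedTrial

theorem stmt7_general
    {Ω : Type*} [MeasurableSpace Ω] (μ : Measure Ω) [IsProbabilityMeasure μ]
    (H J : ℕ)
    (Z : ℕ → Ω → Fin H) (δ : ℕ → Ω → Fin J) (Y : ℕ → Ω → ℝ)
    (p : Fin H → ℝ)
    (hZmeas : ∀ i, Measurable (Z i)) (hδmeas : ∀ i, Measurable (δ i))
    (hYmeas : ∀ i, Measurable (Y i))
    (hY01 : ∀ i ω, Y i ω = 0 ∨ Y i ω = 1)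
    (hp : ∀ h, 0 < p h)
    (𝓕 : ℕ → MeasurableSpace Ω)
    (h𝓕 : ∀ n, 𝓕 n = ⨆ i ∈ Finset.range n,
      (MeasurableSpace.comap (Z i) ⊤ ⊔ MeasurableSpace.comap (δ i) ⊤ ⊔ MeasurableSpace.comap (Y i) ⊤))
    (hZlaw : ∀ i h, μ {ω | Z i ω = h} = ENNReal.ofReal (p h))
    (hZindep : ∀ i, Indep (MeasurableSpace.comap (Z i) ⊤) (𝓕 i) μ)
    (N : Fin J → Fin H → ℕ → Ω → ℝ)
    (hN : ∀ j h n ω, N j h n ω = ∑ i ∈ Finset.range n, if Z i ω = h ∧ δ i ω = j then 1 else 0)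
    (π : Fin J → Fin H → ℕ → Ω → ℝ)
    (hπmeas : ∀ j h n, Measurable[𝓕 n] (π j h n))
    (hπmem : ∀ j h n ω, π j h n ω ∈ Set.Icc (0:ℝ) 1)
    (hπsum : ∀ h n ω, ∑ j, π j h n ω = 1)
    (halloc : ∀ n j', μ[(fun ω => if δ n ω = j' then (1:ℝ) else 0) |
        𝓕 n ⊔ MeasurableSpace.comap (Z n) ⊤]
      =ᵐ[μ] fun ω => ∑ h', (if Z n ω = h' then (1:ℝ) else 0) * π j' h' n ω)
    (h : Fin H) (T : Finset (Fin J)) :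
    μ ({ω | 0 < Filter.liminf (fun n => ∑ j ∈ T, π j h n ω) atTop} \
       {ω | 0 < Filter.liminf (fun n => (∑ j ∈ T, N j h n ω) / (n : ℝ)) atTop}) = 0 ∧
    μ ({ω | 0 < Filter.liminf (fun n => (∑ j ∈ T, N j h n ω) / (n : ℝ)) atTop} \
       ⋃ j ∈ T, {ω | Tendsto (fun n => N j h n ω) atTop atTop}) = 0 := by
  obtain rfl : 𝓕 = _ := funext h𝓕
  have hσ (i : ℕ) : MeasurableSpace.comap (Z i) ⊤ ⊔ MeasurableSpace.comap (δ i) ⊤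
      ⊔ MeasurableSpace.comap (Y i) ⊤ ≤ ‹MeasurableSpace Ω› :=
    sup_le (sup_le (hZmeas i).comap_le (hδmeas i).comap_le) <| comap_top_le_of_countable_range
      (hYmeas i) ((Set.toFinite {0, 1}).countable.mono (Set.range_subset_iff.2 (hY01 i)))
  have hph (i : ℕ) : μ.real {ω | Z i ω = h} = p h := by
    rw [measureReal_def, hZlaw, ENNReal.toReal_ofReal (hp h).le]
  have hlln := ae_tendsto_sum_range_stratum_sub_div (𝓖 := accumulatedFiltration _ hσ)
    (fun i => le_sup_left.trans (le_accumulatedFiltration_succ hσ i)) hZindep hπmeas hπmem hπsum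
    halloc h T
  simp only [hph] at hlln
  have hNX (n : ℕ) (ω : Ω) : ∑ j ∈ T, N j h n ω
      = ∑ i ∈ range n, if Z i ω = h ∧ δ i ω ∈ T then (1 : ℝ) else 0 := by
    simp only [hN]
    rw [sum_comm]
    refine sum_congr rfl fun i _ => ?_
    by_cases hz : Z i ω = h <;> simp [hz]
  refine ⟨measure_mono_null ?_ (ae_iff.1 hlln), measure_mono_null ?_ measure_empty⟩
  · rintro ω ⟨hπpos, hNpos⟩ hω
    apply hNpos
    simp only [Set.mem_ofPred_eq, hNX]
    exact liminf_sum_range_div_pos (fun i => by split_ifs <;> norm_num)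
      (fun n => sum_nonneg fun j _ => (hπmem j h n ω).1) (hp h) hπpos hω
  · rintro ω ⟨hpos, hnot⟩
    have hmono (j : Fin J) : Monotone fun n => N j h n ω := monotone_nat_of_le_succ fun n => by
      simp only [hN, sum_range_succ]
      split_ifs <;> simp
    obtain ⟨j, hj, hjt⟩ := exists_tendsto_atTop_of_liminf_pos (fun j _ => hmono j) hpos
    exact hnot (Set.mem_biUnion hj hjt)

theorem stmt7
    {Ω : Type*} [MeasurableSpace Ω] (μ : Measure Ω) [IsProbabilityMeasure μ]
    (H J : ℕ) (hH : 1 ≤ H) (hJ : 2 ≤ J)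
    (Z : ℕ → Ω → Fin H) (δ : ℕ → Ω → Fin J) (Y : ℕ → Ω → ℝ)
    (p : Fin H → ℝ)
    (hZmeas : ∀ i, Measurable (Z i)) (hδmeas : ∀ i, Measurable (δ i))
    (hYmeas : ∀ i, Measurable (Y i))
    (hY01 : ∀ i ω, Y i ω = 0 ∨ Y i ω = 1)
    (hp : ∀ h, 0 < p h)
    (𝓕 : ℕ → MeasurableSpace Ω)
    (h𝓕 : ∀ n, 𝓕 n = ⨆ i ∈ Finset.range n,
      (MeasurableSpace.comap (Z i) ⊤ ⊔ MeasurableSpace.comap (δ i) ⊤ ⊔ MeasurableSpace.comap (Y i) ⊤))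
    (hZlaw : ∀ i h, μ {ω | Z i ω = h} = ENNReal.ofReal (p h))
    (hZindep : ∀ i, Indep (MeasurableSpace.comap (Z i) ⊤) (𝓕 i) μ)
    (N : Fin J → Fin H → ℕ → Ω → ℝ)
    (hN : ∀ j h n ω, N j h n ω = ∑ i ∈ Finset.range n, if Z i ω = h ∧ δ i ω = j then 1 else 0)
    (π : Fin J → Fin H → ℕ → Ω → ℝ)
    (hπmeas : ∀ j h n, Measurable[𝓕 n] (π j h n))
    (hπmem : ∀ j h n ω, π j h n ω ∈ Set.Icc (0:ℝ) 1)
    (hπsum : ∀ h n ω, ∑ j, π j h n ω = 1)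
    (halloc : ∀ n j', μ[(fun ω => if δ n ω = j' then (1:ℝ) else 0) |
        𝓕 n ⊔ MeasurableSpace.comap (Z n) ⊤]
      =ᵐ[μ] fun ω => ∑ h', (if Z n ω = h' then (1:ℝ) else 0) * π j' h' n ω)
    (h : Fin H) (T : Finset (Fin J)) (hT : T.Nonempty) :
    μ ({ω | 0 < Filter.liminf (fun n => ∑ j ∈ T, π j h n ω) atTop} \
       {ω | 0 < Filter.liminf (fun n => (∑ j ∈ T, N j h n ω) / (n : ℝ)) atTop}) = 0 ∧
    μ ({ω | 0 < Filter.liminf (fun n => (∑ j ∈ T, N j h n ω) / (n : ℝ)) atTop} \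
       ⋃ j ∈ T, {ω | Tendsto (fun n => N j h n ω) atTop atTop}) = 0 :=
  stmt7_general μ H J Z δ Y p hZmeas hδmeas hYmeas hY01 hp 𝓕 h𝓕 hZlaw hZindep N hN π hπmeas hπmem
    hπsum halloc h T
end

section
/- Let σ = s_·/n_· and define g(x) = l(σx, (1−σ)x) for x > 0. Then lim_{x→∞} x²·g'(x) = −(1/2)·(n_·/s_·)·(n_·/f_·)·[ Σ_{h=1}^H n_h² (s_h/n_h − σ)² − n_· σ(1−σ) ]. -/
open Real Finset Filter Topology

/-!
By `Γ(z + 1) = z Γ(z)`, `log B(a + s, b + f) - log B(a, b)` is the finite sum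
`∑_{i<s} log (a + i) + ∑_{j<f} log (b + j) - ∑_{k<s+f} log (a + b + k)`.
On the ray `(σx, (1 - σ)x)` each term `log (c x + i)` has derivative
`c / (c x + i) = 1 / x - i / (c x²) + O(x⁻³)`. The `1 / x` terms cancel in every stratum because
`s_h + f_h = n_h`, and the `x⁻²` coefficients, computed with `∑_{i<m} i = m (m - 1) / 2` and
summed using `∑_h (s_h - σ n_h) = 0`, give the limit.
-/

noncomputable def logRising (a : ℝ) (m : ℕ) : ℝ := ∑ i ∈ range m, log (a + i)

noncomputable def logRisingDeriv (c : ℝ) (m : ℕ) (x : ℝ) : ℝ := ∑ i ∈ range m, c / (c * x + i)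

lemma log_Gamma_add_nat {a : ℝ} (ha : 0 < a) (m : ℕ) :
    log (Gamma (a + m)) = log (Gamma a) + logRising a m := by
  induction m with
  | zero => simp [logRising]
  | succ m ih =>
    have ham : 0 < a + m := by positivity
    rw [Nat.cast_succ, ← add_assoc, Gamma_add_one ham.ne',
      log_mul ham.ne' (Gamma_pos_of_pos ham).ne', ih, logRising, logRising, sum_range_succ]
    ring

lemma log_Gamma_mul_Gamma_div_Gamma {a b : ℝ} (ha : 0 < a) (hb : 0 < b) :
    log (Gamma a * Gamma b / Gamma (a + b)) =
      log (Gamma a) + log (Gamma b) - log (Gamma (a + b)) := by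
  rw [log_div (by positivity) (Gamma_pos_of_pos (by positivity)).ne',
    log_mul (Gamma_pos_of_pos ha).ne' (Gamma_pos_of_pos hb).ne']

lemma log_beta_add_nat_sub_log_beta {a b : ℝ} (ha : 0 < a) (hb : 0 < b) (s f : ℕ) :
    log (Gamma (a + s) * Gamma (b + f) / Gamma (a + s + (b + f))) -
        log (Gamma a * Gamma b / Gamma (a + b)) =
      logRising a s + logRising b f - logRising (a + b) (s + f) := by
  have hab : a + s + (b + f) = a + b + ((s + f : ℕ) : ℝ) := by push_cast; ring
  rw [log_Gamma_mul_Gamma_div_Gamma (by positivity) (by positivity),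
    log_Gamma_mul_Gamma_div_Gamma ha hb, hab, log_Gamma_add_nat ha, log_Gamma_add_nat hb,
    log_Gamma_add_nat (add_pos ha hb)]
  ring

lemma hasDerivAt_logRising_mul {c y : ℝ} (hcy : 0 < c * y) (m : ℕ) :
    HasDerivAt (fun y => logRising (c * y) m) (logRisingDeriv c m y) y := by
  refine HasDerivAt.fun_sum fun i _ => ?_
  have hlin : HasDerivAt (fun y => c * y + i) c y := by
    simpa using ((hasDerivAt_id y).const_mul c).add_const (i : ℝ)
  have hpos : 0 < c * y + i := by positivity
  exact hlin.log hpos.ne'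

lemma tendsto_sq_mul_div_sub {c : ℝ} (hc : 0 < c) {i : ℝ} (hi : 0 ≤ i) :
    Tendsto (fun x => x ^ 2 * (c / (c * x + i)) - x) atTop (𝓝 (-i / c)) := by
  have hden : Tendsto (fun x : ℝ => c + i / x) atTop (𝓝 c) := by
    simpa using tendsto_const_nhds.add (tendsto_const_nhds.div_atTop (tendsto_id (α := ℝ)))
  have hquot : Tendsto (fun x => -i / (c + i / x)) atTop (𝓝 (-i / c)) :=
    tendsto_const_nhds.div hden hc.ne'
  refine hquot.congr' ?_
  filter_upwards [eventually_gt_atTop 0] with x hx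
  have : 0 < c * x + i := by positivity
  field_simp
  ring

lemma sum_range_natCast (m : ℕ) : ∑ i ∈ range m, (i : ℝ) = m * (m - 1) / 2 := by
  induction m with
  | zero => simp
  | succ m ih => rw [sum_range_succ, ih]; push_cast; ring

lemma tendsto_sq_mul_logRisingDeriv_sub {c : ℝ} (hc : 0 < c) (m : ℕ) :
    Tendsto (fun x => x ^ 2 * logRisingDeriv c m x - m * x) atTop
      (𝓝 (-(m * (m - 1) / 2) / c)) := by
  have hlim := tendsto_finsetSum (range m) fun i _ =>
    tendsto_sq_mul_div_sub hc (Nat.cast_nonneg (α := ℝ) i)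
  rw [← sum_div, sum_neg_distrib, sum_range_natCast] at hlim
  refine hlim.congr fun x => ?_
  simp [logRisingDeriv, mul_sum, sum_sub_distrib]

noncomputable def stratumLogLik (σ : ℝ) (s n : ℕ) (y : ℝ) : ℝ :=
  logRising (σ * y) s + logRising ((1 - σ) * y) (n - s) - logRising y n

lemma log_beta_sub_log_beta_eq_stratumLogLik {σ y : ℝ} (hσ0 : 0 < σ) (hσ1 : σ < 1) (hy : 0 < y)
    {s n : ℕ} (hsn : s ≤ n) :
    log (Gamma (σ * y + s) * Gamma ((1 - σ) * y + ((n : ℝ) - s)) /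
        Gamma (σ * y + s + ((1 - σ) * y + ((n : ℝ) - s)))) -
      log (Gamma (σ * y) * Gamma ((1 - σ) * y) / Gamma (σ * y + (1 - σ) * y)) =
      stratumLogLik σ s n y := by
  have hy' : 0 < (1 - σ) * y := mul_pos (sub_pos.2 hσ1) hy
  rw [← Nat.cast_sub hsn, log_beta_add_nat_sub_log_beta (mul_pos hσ0 hy) hy',
    Nat.add_sub_cancel' hsn, stratumLogLik, show σ * y + (1 - σ) * y = y by ring]

lemma hasDerivAt_stratumLogLik {σ y : ℝ} (hσ0 : 0 < σ) (hσ1 : σ < 1) (hy : 0 < y) (s n : ℕ) :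
    HasDerivAt (stratumLogLik σ s n)
      (logRisingDeriv σ s y + logRisingDeriv (1 - σ) (n - s) y - logRisingDeriv 1 n y) y := by
  have h1 := hasDerivAt_logRising_mul (c := 1) (by simpa using hy) n
  simp only [one_mul] at h1
  exact ((hasDerivAt_logRising_mul (mul_pos hσ0 hy) s).add
    (hasDerivAt_logRising_mul (mul_pos (sub_pos.2 hσ1) hy) (n - s))).sub h1

lemma tendsto_sq_mul_deriv_stratumLogLik {σ : ℝ} (hσ0 : 0 < σ) (hσ1 : σ < 1) {s n : ℕ}
    (hsn : s ≤ n) :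
    Tendsto (fun x => x ^ 2 * deriv (stratumLogLik σ s n) x) atTop
      (𝓝 (-((s - σ * n) ^ 2 - n * (σ * (1 - σ)) - (1 - 2 * σ) * (s - σ * n)) /
        (2 * σ * (1 - σ)))) := by
  have hlim := ((tendsto_sq_mul_logRisingDeriv_sub hσ0 s).add
    (tendsto_sq_mul_logRisingDeriv_sub (sub_pos.2 hσ1) (n - s))).sub
    (tendsto_sq_mul_logRisingDeriv_sub one_pos n)
  rw [Nat.cast_sub hsn] at hlim
  convert hlim.congr' _ using 2
  · have : σ ≠ 1 := hσ1.ne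
    field_simp
    ring
  · filter_upwards [eventually_gt_atTop 0] with x hx
    rw [(hasDerivAt_stratumLogLik hσ0 hσ1 hx s n).deriv]
    ring

lemma sq_mul_div_sub_sq {s n σ : ℝ} (h : n = 0 → s = 0) :
    n ^ 2 * (s / n - σ) ^ 2 = (s - σ * n) ^ 2 := by
  rcases eq_or_ne n 0 with hn | hn
  · simp [hn, h hn]
  · field_simp

lemma sum_stratum_limits {ι : Type*} (t : Finset ι) {s n : ι → ℕ} (hsn : ∀ i ∈ t, s i ≤ n i)
    {σ : ℝ} (hσ0 : σ ≠ 0) (hσ1 : σ ≠ 1) (hsum : ∑ i ∈ t, (s i : ℝ) = σ * ∑ i ∈ t, (n i : ℝ)) :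
    ∑ i ∈ t, -(((s i : ℝ) - σ * n i) ^ 2 - n i * (σ * (1 - σ)) - (1 - 2 * σ) * (s i - σ * n i)) /
        (2 * σ * (1 - σ)) =
      -(1 / 2) * (1 / σ) * (1 / (1 - σ)) *
        (∑ i ∈ t, (n i : ℝ) ^ 2 * ((s i : ℝ) / n i - σ) ^ 2 - (∑ i ∈ t, (n i : ℝ)) * σ * (1 - σ)) := by
  have hdev : ∑ i ∈ t, ((s i : ℝ) - σ * n i) = 0 := by
    rw [sum_sub_distrib, ← mul_sum, hsum, sub_self]
  have hsq : ∑ i ∈ t, (n i : ℝ) ^ 2 * ((s i : ℝ) / n i - σ) ^ 2 =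
      ∑ i ∈ t, ((s i : ℝ) - σ * n i) ^ 2 :=
    sum_congr rfl fun i hi => sq_mul_div_sub_sq fun hn0 => by
      have := hsn i hi
      rw [Nat.cast_eq_zero] at hn0 ⊢
      omega
  have hσ1' : 1 - σ ≠ 0 := sub_ne_zero.2 hσ1.symm
  rw [← sum_div, sum_neg_distrib, sum_sub_distrib, sum_sub_distrib, ← sum_mul, ← mul_sum, hdev, hsq]
  field_simp
  ring

theorem stmt17_general
    (H : ℕ)
    (n s : Fin H → ℕ)
    (hsn : ∀ h, s h ≤ n h)
    (sdot ndot fdot : ℝ)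
    (hsdot : sdot = ∑ h, (s h : ℝ)) (hndot : ndot = ∑ h, (n h : ℝ))
    (hfdot : fdot = ndot - sdot)
    (hs1 : 1 ≤ sdot) (hf1 : 1 ≤ fdot)
    (B : ℝ → ℝ → ℝ)
    (hB : ∀ a b, B a b = Real.Gamma a * Real.Gamma b / Real.Gamma (a + b))
    (l : ℝ → ℝ → ℝ)
    (hl : ∀ α β, l α β =
      ∑ h, (Real.log (B (α + (s h : ℝ)) (β + ((n h : ℝ) - (s h : ℝ)))) - Real.log (B α β)))
    (σ : ℝ) (hσ : σ = sdot / ndot) :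
    Tendsto (fun x => x^2 * deriv (fun y => l (σ * y) ((1 - σ) * y)) x)
      atTop
      (nhds (-(1/2) * (ndot / sdot) * (ndot / fdot) *
        ((∑ h, (n h : ℝ)^2 * ((s h : ℝ) / (n h : ℝ) - σ)^2) - ndot * σ * (1 - σ)))) := by
  have hN : 0 < ndot := by linarith
  have hS : sdot = σ * ndot := by rw [hσ, div_mul_cancel₀ _ hN.ne']
  have hF : fdot = (1 - σ) * ndot := by rw [hfdot, hS]; ring
  have hσ0 : 0 < σ := by rw [hσ]; exact div_pos (by linarith) hN
  have hσ1 : σ < 1 := by rw [hσ, div_lt_one hN]; linarith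
  have hderiv : ∀ x, 0 < x → deriv (fun y => l (σ * y) ((1 - σ) * y)) x =
      ∑ h, deriv (stratumLogLik σ (s h) (n h)) x := by
    intro x hx
    have hloc : (fun y => l (σ * y) ((1 - σ) * y)) =ᶠ[𝓝 x]
        fun y => ∑ h, stratumLogLik σ (s h) (n h) y := by
      filter_upwards [Ioi_mem_nhds hx] with y hy
      simp only [hl, hB, log_beta_sub_log_beta_eq_stratumLogLik hσ0 hσ1 hy (hsn _)]
    rw [hloc.deriv_eq, deriv_fun_sum fun h _ =>
      (hasDerivAt_stratumLogLik hσ0 hσ1 hx (s h) (n h)).differentiableAt]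
  have hNS : ndot / sdot = 1 / σ := by rw [hS]; field_simp
  have hNF : ndot / fdot = 1 / (1 - σ) := by rw [hF]; field_simp
  rw [hNS, hNF, hndot, ← sum_stratum_limits univ (fun h _ => hsn h) hσ0.ne' hσ1.ne
    (by rw [← hsdot, ← hndot, hS])]
  refine (tendsto_finsetSum univ fun h _ =>
    tendsto_sq_mul_deriv_stratumLogLik hσ0 hσ1 (hsn h)).congr' ?_
  filter_upwards [eventually_gt_atTop 0] with x hx
  rw [hderiv x hx, mul_sum]

theorem stmt17
    (H : ℕ) (hH : 1 ≤ H)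
    (n s : Fin H → ℕ)
    (hn1 : ∀ h, 1 ≤ n h) (hsn : ∀ h, s h ≤ n h)
    (sdot ndot fdot : ℝ)
    (hsdot : sdot = ∑ h, (s h : ℝ)) (hndot : ndot = ∑ h, (n h : ℝ))
    (hfdot : fdot = ndot - sdot)
    (hs1 : 1 ≤ sdot) (hf1 : 1 ≤ fdot)
    (B : ℝ → ℝ → ℝ)
    (hB : ∀ a b, B a b = Real.Gamma a * Real.Gamma b / Real.Gamma (a + b))
    (l : ℝ → ℝ → ℝ)
    (hl : ∀ α β, l α β =
      ∑ h, (Real.log (B (α + (s h : ℝ)) (β + ((n h : ℝ) - (s h : ℝ)))) - Real.log (B α β)))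
    (σ : ℝ) (hσ : σ = sdot / ndot) :
    Tendsto (fun x => x^2 * deriv (fun y => l (σ * y) ((1 - σ) * y)) x)
      atTop
      (nhds (-(1/2) * (ndot / sdot) * (ndot / fdot) *
        ((∑ h, (n h : ℝ)^2 * ((s h : ℝ) / (n h : ℝ) - σ)^2) - ndot * σ * (1 - σ)))) :=
  stmt17_general H n s hsn sdot ndot fdot hsdot hndot hfdot hs1 hf1 B hB l hl σ hσ
end

section
/- The function l is continuous on (0,∞)², and for each fixed β > 0 one has l(α,β) → −∞ as α → 0⁺, while for each fixed α > 0 one has l(α,β) → −∞ as β → 0⁺. -/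
open MeasureTheory ProbabilityTheory Filter

/-!
Write `B` for the normalising constant `beta` of the beta distribution. From `Γ(x + 1) = x Γ(x)`
one gets `log B(x, y) + log x = log B(x + 1, y) + log (x + y)`, whose right-hand side is
continuous at `x = 0`; so `log B(α, β) → +∞` as `α → 0⁺`, like `-log α`. A summand
`log B(α + s_h, β + f_h) - log B(α, β)` of `l` tends to `-∞` when `s_h > 0`, and stays bounded
when `s_h = 0`, since then the two `-log α` singularities cancel. As `s_· ≥ 1`, some `s_h` is
positive, so `l → -∞`. The case `β → 0⁺` is the same argument after the symmetry
`B(x, y) = B(y, x)`, using `f_· ≥ 1`.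
-/

open Topology

theorem Filter.Tendsto.finset_sum_atBot {ι α R : Type*} [AddCommGroup R] [PartialOrder R]
    [IsOrderedAddMonoid R] {l : Filter α} {s : Finset ι} {f : ι → α → R} {i₀ : ι}
    (hi₀ : i₀ ∈ s) (h₀ : Tendsto (f i₀) l atBot)
    (hbdd : ∀ i ∈ s, IsBoundedUnder (· ≤ ·) l (f i)) :
    Tendsto (fun x => ∑ i ∈ s, f i x) l atBot := by
  classical
  obtain ⟨C, hC⟩ := isBoundedUnder_le_sum (s.erase i₀) fun i hi => hbdd i (s.mem_of_mem_erase hi)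
  refine (tendsto_atBot_add_right_of_ge' l C h₀ (g := ∑ k ∈ s.erase i₀, f k) hC).congr fun x => ?_
  rw [Finset.sum_apply, Finset.add_sum_erase s (f · x) hi₀]

namespace ProbabilityTheory

lemma beta_comm (x y : ℝ) : beta x y = beta y x := by
  rw [beta, beta, mul_comm, add_comm]

lemma beta_add_one_left {x y : ℝ} (hx : 0 < x) (hy : 0 < y) :
    beta (x + 1) y = beta x y * x / (x + y) := by
  have hΓ : Real.Gamma (x + y) ≠ 0 := (Real.Gamma_pos_of_pos (add_pos hx hy)).ne'
  rw [beta, beta, add_right_comm, Real.Gamma_add_one hx.ne',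
    Real.Gamma_add_one (add_pos hx hy).ne']
  field_simp

lemma log_beta_add_log {x y : ℝ} (hx : 0 < x) (hy : 0 < y) :
    Real.log (beta x y) + Real.log x = Real.log (beta (x + 1) y) + Real.log (x + y) := by
  rw [beta_add_one_left hx hy, Real.log_div (by positivity [beta_pos hx hy]) (by positivity),
    Real.log_mul (beta_pos hx hy).ne' hx.ne']
  ring

lemma continuousAt_log_beta {p : ℝ × ℝ} (hx : 0 < p.1) (hy : 0 < p.2) :
    ContinuousAt (fun q : ℝ × ℝ => Real.log (beta q.1 q.2)) p := by
  have hΓ {x : ℝ} (hx : 0 < x) : ContinuousAt Real.Gamma x :=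
    (Real.differentiableAt_Gamma fun m hm => by linarith [m.cast_nonneg (α := ℝ)]).continuousAt
  refine ContinuousAt.log ?_ (beta_pos hx hy).ne'
  exact (((hΓ hx).comp continuousAt_fst).mul ((hΓ hy).comp continuousAt_snd)).div
    ((hΓ (add_pos hx hy)).comp (f := fun q : ℝ × ℝ => q.1 + q.2)
      (continuousAt_fst.add continuousAt_snd))
    (Real.Gamma_pos_of_pos (add_pos hx hy)).ne'

lemma tendsto_log_beta_add_log {y : ℝ} (hy : 0 < y) :
    Tendsto (fun x => Real.log (beta x y) + Real.log x) (𝓝[>] 0)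
      (𝓝 (Real.log (beta 1 y) + Real.log y)) := by
  have hcont : ContinuousAt (fun x => Real.log (beta (x + 1) y) + Real.log (x + y)) 0 := by
    refine ContinuousAt.add ?_ ((Real.continuousAt_log (by simpa using hy.ne')).comp
      (f := fun x => x + y) (continuousAt_id.add continuousAt_const))
    exact (continuousAt_log_beta (p := (0 + 1, y)) (by simp) hy).comp
      (f := fun x => (x + 1, y)) ((continuousAt_id.add continuousAt_const).prodMk continuousAt_const)
  refine (hcont.tendsto.mono_left nhdsWithin_le_nhds).congr' ?_ |>.trans (by simp)
  filter_upwards [self_mem_nhdsWithin] with x hx using (log_beta_add_log hx hy).symm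

lemma tendsto_log_beta_nhdsGT_zero {y : ℝ} (hy : 0 < y) :
    Tendsto (fun x => Real.log (beta x y)) (𝓝[>] 0) atTop := by
  have := (tendsto_log_beta_add_log hy).add_atTop
    (tendsto_neg_atBot_atTop.comp Real.tendsto_log_nhdsGT_zero)
  simpa only [Function.comp_apply, add_neg_cancel_right] using this

lemma tendsto_log_beta_add_sub_log_beta {a b y : ℝ} (ha : 0 < a) (hb : 0 ≤ b) (hy : 0 < y) :
    Tendsto (fun x => Real.log (beta (x + a) (y + b)) - Real.log (beta x y)) (𝓝[>] 0) atBot := by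
  have hcont : Tendsto (fun x => Real.log (beta (x + a) (y + b))) (𝓝[>] 0)
      (𝓝 (Real.log (beta (0 + a) (y + b)))) :=
    ((continuousAt_log_beta (p := (0 + a, y + b)) (by simpa using ha) (by positivity)).comp
      (f := fun x => (x + a, y + b))
      ((continuousAt_id.add continuousAt_const).prodMk continuousAt_const)).tendsto.mono_left
      nhdsWithin_le_nhds
  simpa only [sub_eq_add_neg, Function.comp_apply] using
    hcont.add_atBot (tendsto_neg_atTop_atBot.comp (tendsto_log_beta_nhdsGT_zero hy))

lemma isBoundedUnder_le_log_beta_add_sub_log_beta {a b y : ℝ} (ha : 0 ≤ a) (hb : 0 ≤ b)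
    (hy : 0 < y) :
    IsBoundedUnder (· ≤ ·) (𝓝[>] 0)
      (fun x => Real.log (beta (x + a) (y + b)) - Real.log (beta x y)) := by
  rcases ha.eq_or_lt with rfl | ha
  · refine (((tendsto_log_beta_add_log (add_pos_of_pos_of_nonneg hy hb)).sub
      (tendsto_log_beta_add_log hy)).congr fun x => ?_).isBoundedUnder_le
    rw [add_zero]
    ring
  · exact (tendsto_log_beta_add_sub_log_beta ha hb hy).isBoundedUnder_le_atBot

lemma tendsto_sum_log_beta_add_sub_log_beta {ι : Type*} [Fintype ι] {a b : ι → ℝ}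
    (ha : ∀ i, 0 ≤ a i) (hb : ∀ i, 0 ≤ b i) (hpos : ∃ i, 0 < a i) {y : ℝ} (hy : 0 < y) :
    Tendsto (fun x => ∑ i, (Real.log (beta (x + a i) (y + b i)) - Real.log (beta x y)))
      (𝓝[>] 0) atBot := by
  obtain ⟨i₀, hi₀⟩ := hpos
  exact Tendsto.finset_sum_atBot (Finset.mem_univ i₀)
    (tendsto_log_beta_add_sub_log_beta hi₀ (hb i₀) hy)
    fun i _ => isBoundedUnder_le_log_beta_add_sub_log_beta (ha i) (hb i) hy

lemma continuousOn_sum_log_beta_add_sub_log_beta {ι : Type*} [Fintype ι] {a b : ι → ℝ}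
    (ha : ∀ i, 0 ≤ a i) (hb : ∀ i, 0 ≤ b i) :
    ContinuousOn
      (fun q : ℝ × ℝ => ∑ i, (Real.log (beta (q.1 + a i) (q.2 + b i)) - Real.log (beta q.1 q.2)))
      {q | 0 < q.1 ∧ 0 < q.2} := by
  rintro q ⟨hq₁, hq₂⟩
  refine ContinuousAt.continuousWithinAt (tendsto_finsetSum _ fun i _ => ?_)
  refine ContinuousAt.sub ?_ (continuousAt_log_beta hq₁ hq₂)
  exact (continuousAt_log_beta (p := (q.1 + a i, q.2 + b i))
    (add_pos_of_pos_of_nonneg hq₁ (ha i)) (add_pos_of_pos_of_nonneg hq₂ (hb i))).comp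
    (f := fun q : ℝ × ℝ => (q.1 + a i, q.2 + b i))
    ((continuousAt_fst.add continuousAt_const).prodMk (continuousAt_snd.add continuousAt_const))

end ProbabilityTheory

theorem stmt18_general
    (H : ℕ)
    (n s : Fin H → ℕ)
    (hsn : ∀ h, s h ≤ n h)
    (sdot ndot fdot : ℝ)
    (hsdot : sdot = ∑ h, (s h : ℝ)) (hndot : ndot = ∑ h, (n h : ℝ))
    (hfdot : fdot = ndot - sdot)
    (hs1 : 1 ≤ sdot) (hf1 : 1 ≤ fdot)
    (B : ℝ → ℝ → ℝ)
    (hB : ∀ a b, B a b = Real.Gamma a * Real.Gamma b / Real.Gamma (a + b))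
    (l : ℝ → ℝ → ℝ)
    (hl : ∀ α β, l α β =
      ∑ h, (Real.log (B (α + (s h : ℝ)) (β + ((n h : ℝ) - (s h : ℝ)))) - Real.log (B α β)))
    :
    ContinuousOn (fun q : ℝ × ℝ => l q.1 q.2) {q : ℝ × ℝ | 0 < q.1 ∧ 0 < q.2} ∧
    (∀ β : ℝ, 0 < β → Tendsto (fun α => l α β) (nhdsWithin 0 (Set.Ioi 0)) atBot) ∧
    (∀ α : ℝ, 0 < α → Tendsto (fun β => l α β) (nhdsWithin 0 (Set.Ioi 0)) atBot) := by
  set f : Fin H → ℝ := fun h => (n h : ℝ) - s h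
  have hl_beta : ∀ α β, l α β = ∑ h, (Real.log (beta (α + s h) (β + f h)) - Real.log (beta α β)) :=
    fun α β => by simp only [hl, hB, beta, f]
  have hs_nonneg : ∀ h, 0 ≤ (s h : ℝ) := fun h => (s h).cast_nonneg
  have hf_nonneg : ∀ h, 0 ≤ f h := fun h => sub_nonneg.2 (mod_cast hsn h)
  obtain ⟨h₀, -, hs_pos⟩ := Finset.exists_lt_of_sum_lt (f := fun _ => (0 : ℝ))
    (g := fun h => (s h : ℝ)) (s := Finset.univ) (by simp only [Finset.sum_const_zero]; linarith)
  obtain ⟨h₁, -, hf_pos⟩ := Finset.exists_lt_of_sum_lt (f := fun _ => (0 : ℝ)) (g := f)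
    (s := Finset.univ) (by simp only [Finset.sum_const_zero, f, Finset.sum_sub_distrib]; linarith)
  refine ⟨?_, fun β hβ => ?_, fun α hα => ?_⟩
  · simpa only [hl_beta] using continuousOn_sum_log_beta_add_sub_log_beta hs_nonneg hf_nonneg
  · simpa only [hl_beta] using
      tendsto_sum_log_beta_add_sub_log_beta hs_nonneg hf_nonneg ⟨h₀, hs_pos⟩ hβ
  · simpa only [hl_beta, beta_comm] using
      tendsto_sum_log_beta_add_sub_log_beta hf_nonneg hs_nonneg ⟨h₁, hf_pos⟩ hα

theorem stmt18
    (H : ℕ) (hH : 1 ≤ H)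
    (n s : Fin H → ℕ)
    (hn1 : ∀ h, 1 ≤ n h) (hsn : ∀ h, s h ≤ n h)
    (sdot ndot fdot : ℝ)
    (hsdot : sdot = ∑ h, (s h : ℝ)) (hndot : ndot = ∑ h, (n h : ℝ))
    (hfdot : fdot = ndot - sdot)
    (hs1 : 1 ≤ sdot) (hf1 : 1 ≤ fdot)
    (B : ℝ → ℝ → ℝ)
    (hB : ∀ a b, B a b = Real.Gamma a * Real.Gamma b / Real.Gamma (a + b))
    (l : ℝ → ℝ → ℝ)
    (hl : ∀ α β, l α β =
      ∑ h, (Real.log (B (α + (s h : ℝ)) (β + ((n h : ℝ) - (s h : ℝ)))) - Real.log (B α β)))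
    :
    ContinuousOn (fun q : ℝ × ℝ => l q.1 q.2) {q : ℝ × ℝ | 0 < q.1 ∧ 0 < q.2} ∧
    (∀ β : ℝ, 0 < β → Tendsto (fun α => l α β) (nhdsWithin 0 (Set.Ioi 0)) atBot) ∧
    (∀ α : ℝ, 0 < α → Tendsto (fun β => l α β) (nhdsWithin 0 (Set.Ioi 0)) atBot) :=
  stmt18_general H n s hsn sdot ndot fdot hsdot hndot hfdot hs1 hf1 B hB l hl
end
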